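/- arXiv:2305.12309 — 3 statements merged into one kernel-verified Lean document; each statement's English description precedes it below -/
import Mathlib

section
/- For any π ≥ 0, the profit function x ↦ R(x; π) = x·π − λ·E[(x − X)⁺] is nondecreasing on the interval [0, y*(π)]; in particular R(x; π) ≥ R(0; π) = 0 for all x ∈ [0, y*(π)]. If moreover π > 0 and F is strictly increasing on [0, X̄], then x ↦ R(x; π) is strictly increasing on [0, y*(π)]. -/
open MeasureTheory Set

/-- The cumulative distribution function `F(t) = P(X ≤ t)` of a random variable `X`. -/
noncomputable def cdfOf {Ω : Type*} [MeasurableSpace Ω] (μ : Measure Ω) (X : Ω → ℝ) (t : ℝ) : ℝ :=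
  (μ {ω | X ω ≤ t}).toReal

/-- The generalized inverse `F⁻¹(u) = inf {t ≥ 0 : F(t) ≥ u}`. -/
noncomputable def geninv (F : ℝ → ℝ) (u : ℝ) : ℝ :=
  sInf {t : ℝ | 0 ≤ t ∧ u ≤ F t}

/-- The optimal commitment function `y*(π) = F⁻¹(min(π/λ, 1))`. -/
noncomputable def ystar (F : ℝ → ℝ) (lam : ℝ) (pr : ℝ) : ℝ :=
  geninv F (min (pr / lam) 1)

/-- The expected profit `R(x; π) = x·π − λ·E[(x − X)⁺]` of a supplier paid day-ahead
price `π` for committed quantity `x`, with real-time penalty price `λ`. -/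
noncomputable def profit {Ω : Type*} [MeasurableSpace Ω] (μ : Measure Ω) (X : Ω → ℝ)
    (lam : ℝ) (pr : ℝ) (x : ℝ) : ℝ :=
  x * pr - lam * ∫ ω, max (x - X ω) 0 ∂μ

/-!
Pointwise `(b - X)⁺ - (a - X)⁺ ≤ (b - a) · 1{X ≤ b}` for `a ≤ b`, so integrating gives
`R(b) - R(a) ≥ (b - a)(π - λ F(b))`. By continuity of `F` and the intermediate value theorem,
`F(y*(π)) ≤ min(π/λ, 1)`, so this lower bound is nonnegative whenever `b ≤ y*(π)`. For strict
monotonicity pick `a < c < b`: the piece `[a, c]` contributes at least `(c - a)(π - λ F(c))`,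
which is positive because `F(c) < F(b) ≤ π/λ`.
-/

theorem max_sub_zero_sub_max_sub_zero_le {a b : ℝ} (hab : a ≤ b) (x : ℝ) :
    max (b - x) 0 - max (a - x) 0 ≤ (Iic b).indicator (fun _ => b - a) x := by
  by_cases hx : x ≤ b
  · rw [indicator_of_mem (mem_Iic.mpr hx)]
    have := le_max_left (a - x) 0
    have := le_max_right (a - x) 0
    exact sub_le_iff_le_add.mpr (max_le (by linarith) (by linarith))
  · rw [indicator_of_notMem (notMem_Iic.mpr (not_le.mp hx)), max_eq_right (by linarith),
      max_eq_right (by linarith), sub_zero]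

theorem geninv_nonneg (F : ℝ → ℝ) {u t : ℝ} (ht : 0 ≤ t) (hut : u ≤ F t) : 0 ≤ geninv F u :=
  le_csInf ⟨t, ht, hut⟩ fun _ hs => hs.1

theorem geninv_le (F : ℝ → ℝ) {u t : ℝ} (ht : 0 ≤ t) (hut : u ≤ F t) : geninv F u ≤ t :=
  csInf_le ⟨0, fun _ hs => hs.1⟩ ⟨ht, hut⟩

/-- If `F (geninv F u)` exceeded `u`, the intermediate value theorem on `[0, geninv F u]`
would produce a smaller point of the set whose infimum `geninv F u` is. -/
theorem apply_geninv_le {F : ℝ → ℝ} (hF : Continuous F) {u t : ℝ} (hF0 : F 0 ≤ u)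
    (ht : 0 ≤ t) (hut : u ≤ F t) : F (geninv F u) ≤ u := by
  by_contra! h
  obtain ⟨s, hs, hFs⟩ := intermediate_value_Icc (geninv_nonneg F ht hut) hF.continuousOn
    (show u ∈ Icc (F 0) (F (geninv F u)) from ⟨hF0, h.le⟩)
  have hsy : geninv F u ≤ s := geninv_le F hs.1 hFs.ge
  rw [le_antisymm hs.2 hsy] at hFs
  exact h.ne' hFs

section Newsvendor

variable {Ω : Type*} [MeasurableSpace Ω] {μ : Measure Ω} {X : Ω → ℝ}

theorem cdfOf_mono [IsFiniteMeasure μ] : Monotone (cdfOf μ X) := fun _ _ hst =>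
  ENNReal.toReal_mono (measure_ne_top μ _) (measure_mono fun _ h => h.trans hst)

theorem integrable_max_sub_zero [IsFiniteMeasure μ] (hX : Measurable X) (hXnn : ∀ ω, 0 ≤ X ω)
    (x : ℝ) : Integrable (fun ω => max (x - X ω) 0) μ := by
  refine (integrable_const (max x 0)).mono'
    ((measurable_const.sub hX).max measurable_const).aestronglyMeasurable
    (Filter.Eventually.of_forall fun ω => ?_)
  rw [Real.norm_eq_abs, abs_of_nonneg (le_max_right _ _)]
  exact max_le_max (by linarith [hXnn ω]) le_rfl

theorem integral_max_sub_zero_sub_le [IsFiniteMeasure μ] (hX : Measurable X)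
    (hXnn : ∀ ω, 0 ≤ X ω) {a b : ℝ} (hab : a ≤ b) :
    ∫ ω, max (b - X ω) 0 ∂μ - ∫ ω, max (a - X ω) 0 ∂μ ≤ (b - a) * cdfOf μ X b := by
  have hmeas : MeasurableSet (X ⁻¹' Iic b) := hX measurableSet_Iic
  calc ∫ ω, max (b - X ω) 0 ∂μ - ∫ ω, max (a - X ω) 0 ∂μ
      = ∫ ω, (max (b - X ω) 0 - max (a - X ω) 0) ∂μ :=
        (integral_sub (integrable_max_sub_zero hX hXnn b) (integrable_max_sub_zero hX hXnn a)).symm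
    _ ≤ ∫ ω, (X ⁻¹' Iic b).indicator (fun _ => b - a) ω ∂μ :=
        integral_mono ((integrable_max_sub_zero hX hXnn b).sub (integrable_max_sub_zero hX hXnn a))
          ((integrable_const _).indicator hmeas)
          fun ω => max_sub_zero_sub_max_sub_zero_le hab (X ω)
    _ = (b - a) * cdfOf μ X b := by
        rw [integral_indicator_const _ hmeas, smul_eq_mul, mul_comm]
        rfl

theorem profit_zero (hXnn : ∀ ω, 0 ≤ X ω) (lam pr : ℝ) : profit μ X lam pr 0 = 0 := by
  have h : (fun ω => max (0 - X ω) 0) = fun _ => (0 : ℝ) :=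
    funext fun ω => max_eq_right (by linarith [hXnn ω])
  rw [profit, h]
  simp

theorem sub_mul_le_profit_sub [IsFiniteMeasure μ] (hX : Measurable X) (hXnn : ∀ ω, 0 ≤ X ω)
    {lam : ℝ} (hlam : 0 ≤ lam) (pr : ℝ) {a b : ℝ} (hab : a ≤ b) :
    (b - a) * (pr - lam * cdfOf μ X b) ≤ profit μ X lam pr b - profit μ X lam pr a := by
  have := mul_le_mul_of_nonneg_left (integral_max_sub_zero_sub_le (μ := μ) hX hXnn hab) hlam
  simp only [profit]
  linarith

theorem mul_cdfOf_le_of_le_ystar [IsFiniteMeasure μ] (hFc : Continuous (cdfOf μ X))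
    (hF0 : cdfOf μ X 0 = 0) {Xbar : ℝ} (hXbar : 0 ≤ Xbar) (hF1 : cdfOf μ X Xbar = 1)
    {lam pr : ℝ} (hlam : 0 < lam) (hpr : 0 ≤ pr) {x : ℝ} (hx : x ≤ ystar (cdfOf μ X) lam pr) :
    lam * cdfOf μ X x ≤ pr := by
  have hu : cdfOf μ X (ystar (cdfOf μ X) lam pr) ≤ min (pr / lam) 1 :=
    apply_geninv_le hFc (by rw [hF0]; exact le_min (div_nonneg hpr hlam.le) zero_le_one) hXbar
      (hF1 ▸ min_le_right _ _)
  have hFx : cdfOf μ X x ≤ pr / lam := (cdfOf_mono hx).trans (hu.trans (min_le_left _ _))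
  rwa [le_div_iff₀ hlam, mul_comm] at hFx

end Newsvendor

theorem profit_monotone_on_commitment_interval_general
    {Ω : Type*} [MeasurableSpace Ω] (μ : Measure Ω) [IsProbabilityMeasure μ]
    (X : Ω → ℝ) (hX : Measurable X) (hXnn : ∀ ω, 0 ≤ X ω)
    (Xbar : ℝ) (hXbar : 0 < Xbar)
    (hFc : Continuous (cdfOf μ X)) (hF0 : cdfOf μ X 0 = 0) (hF1 : cdfOf μ X Xbar = 1)
    (lam : ℝ) (hlam : 0 < lam) (pr : ℝ) (hpr : 0 ≤ pr) :
    MonotoneOn (fun x => profit μ X lam pr x)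
      (Set.Icc (0:ℝ) (ystar (cdfOf μ X) lam pr)) ∧
    profit μ X lam pr 0 = 0 ∧
    (∀ x ∈ Set.Icc (0:ℝ) (ystar (cdfOf μ X) lam pr),
      profit μ X lam pr 0 ≤ profit μ X lam pr x) ∧
    (0 < pr → StrictMonoOn (cdfOf μ X) (Set.Icc (0:ℝ) Xbar) →
      StrictMonoOn (fun x => profit μ X lam pr x)
        (Set.Icc (0:ℝ) (ystar (cdfOf μ X) lam pr))) := by
  have hmarg : ∀ {x}, x ≤ ystar (cdfOf μ X) lam pr → lam * cdfOf μ X x ≤ pr :=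
    mul_cdfOf_le_of_le_ystar hFc hF0 hXbar.le hF1 hlam hpr
  have hincr : ∀ {a b : ℝ}, a ≤ b →
      (b - a) * (pr - lam * cdfOf μ X b) ≤ profit μ X lam pr b - profit μ X lam pr a :=
    sub_mul_le_profit_sub hX hXnn hlam.le pr
  have hmono : MonotoneOn (fun x => profit μ X lam pr x)
      (Set.Icc (0:ℝ) (ystar (cdfOf μ X) lam pr)) := fun a _ b hb hab => by
    have := mul_nonneg (sub_nonneg.2 hab) (sub_nonneg.2 (hmarg hb.2))
    linarith [hincr hab]
  refine ⟨hmono, profit_zero hXnn lam pr,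
    fun x hx => hmono ⟨le_rfl, hx.1.trans hx.2⟩ hx hx.1, fun _ hFstrict a ha b hb hab => ?_⟩
  obtain ⟨c, hac, hcb⟩ := exists_between hab
  have hyXbar : ystar (cdfOf μ X) lam pr ≤ Xbar :=
    geninv_le _ hXbar.le (hF1 ▸ min_le_right _ _)
  have hFcb : cdfOf μ X c < cdfOf μ X b :=
    hFstrict ⟨ha.1.trans hac.le, (hcb.le.trans hb.2).trans hyXbar⟩ ⟨hb.1, hb.2.trans hyXbar⟩ hcb
  have hgain : 0 < (c - a) * (pr - lam * cdfOf μ X c) :=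
    mul_pos (sub_pos.2 hac) (by nlinarith [hmarg hb.2])
  have hrest : 0 ≤ (b - c) * (pr - lam * cdfOf μ X b) :=
    mul_nonneg (sub_nonneg.2 hcb.le) (sub_nonneg.2 (hmarg hb.2))
  show profit μ X lam pr a < profit μ X lam pr b
  linarith [hincr hac.le, hincr hcb.le]

/-- For any `π ≥ 0`, the profit `x ↦ R(x; π)` is nondecreasing on `[0, y*(π)]`;
in particular `R(x; π) ≥ R(0; π) = 0` on that interval.  If moreover `π > 0` and `F` is
strictly increasing on `[0, X̄]`, then `x ↦ R(x; π)` is strictly increasing on `[0, y*(π)]`. -/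
theorem profit_monotone_on_commitment_interval
    {Ω : Type*} [MeasurableSpace Ω] (μ : Measure Ω) [IsProbabilityMeasure μ]
    (X : Ω → ℝ) (hX : Measurable X) (hXnn : ∀ ω, 0 ≤ X ω)
    (Xbar : ℝ) (hXbar : 0 < Xbar) (hsupp : μ {ω | X ω ≤ Xbar} = 1)
    (hFc : Continuous (cdfOf μ X)) (hF0 : cdfOf μ X 0 = 0) (hF1 : cdfOf μ X Xbar = 1)
    (lam : ℝ) (hlam : 0 < lam) (pr : ℝ) (hpr : 0 ≤ pr) :
    MonotoneOn (fun x => profit μ X lam pr x)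
      (Set.Icc (0:ℝ) (ystar (cdfOf μ X) lam pr)) ∧
    profit μ X lam pr 0 = 0 ∧
    (∀ x ∈ Set.Icc (0:ℝ) (ystar (cdfOf μ X) lam pr),
      profit μ X lam pr 0 ≤ profit μ X lam pr x) ∧
    (0 < pr → StrictMonoOn (cdfOf μ X) (Set.Icc (0:ℝ) Xbar) →
      StrictMonoOn (fun x => profit μ X lam pr x)
        (Set.Icc (0:ℝ) (ystar (cdfOf μ X) lam pr))) :=
  profit_monotone_on_commitment_interval_general μ X hX hXnn Xbar hXbar hFc hF0 hF1 lam hlam pr hpr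
end

section
/- (Proposition 2, primal optimality) Suppose π* satisfies 0 < π* ≤ min(λ, p̄) and Q(π*) = ∑ᵢ yᵢ*(π*) = D. Then the vector (x₀*, x₁*, …, x_I*) with xᵢ* = yᵢ*(π*) for each supplier i and x₀* = 0 is an optimal solution of the problem: minimize ∑ᵢ λ·E[(xᵢ − Xᵢ)⁺] + p̄·x₀ subject to ∑ᵢ xᵢ + x₀ = D, x₀ ≥ 0, and xᵢ ≥ 0 for all i. -/
open MeasureTheory Set

lemma integrable_posPart {Ω : Type*} [MeasurableSpace Ω] (μ : Measure Ω) [IsProbabilityMeasure μ]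
    (X : Ω → ℝ) (hX : Measurable X) (hXnn : ∀ ω, 0 ≤ X ω) (x : ℝ) :
    Integrable (fun ω => max (x - X ω) 0) μ := by
  refine (integrable_const |x|).mono' ?_ ?_
  · exact ((measurable_const.sub hX).max measurable_const).aestronglyMeasurable
  · refine Filter.Eventually.of_forall fun ω => ?_
    rw [Real.norm_eq_abs, abs_of_nonneg (le_max_right _ _)]
    have hx := hXnn ω
    rcases le_or_gt x (X ω) with h | h
    · rw [max_eq_right (by linarith : x - X ω ≤ 0)]
      exact abs_nonneg x
    · rw [max_eq_left (by linarith : (0:ℝ) ≤ x - X ω)]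
      have : x - X ω ≤ x := by linarith
      exact this.trans (le_abs_self x)

lemma cdf_geninv_eq (F : ℝ → ℝ) (hF : Continuous F) (hF0 : F 0 = 0)
    (u b : ℝ) (hu : 0 < u) (hb : 0 ≤ b) (hub : u ≤ F b) :
    F (geninv F u) = u := by
  set S : Set ℝ := {t : ℝ | 0 ≤ t ∧ u ≤ F t} with hS
  have hgi : geninv F u = sInf S := rfl
  have hne : S.Nonempty := ⟨b, hb, hub⟩
  have hbdd : BddBelow S := ⟨0, fun t ht => ht.1⟩
  have hclosed : IsClosed S :=
    isClosed_Ici.inter (isClosed_Ici.preimage hF)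
  have hmem : geninv F u ∈ S := by rw [hgi]; exact hclosed.csInf_mem hne hbdd
  have hge : u ≤ F (geninv F u) := hmem.2
  have hpos : 0 < geninv F u := by
    rcases lt_or_eq_of_le hmem.1 with h | h
    · exact h
    · exfalso; rw [← h, hF0] at hge; linarith
  by_contra hne'
  have hlt : u < F (geninv F u) := lt_of_le_of_ne hge (fun h => hne' h.symm)
  have hopen : IsOpen (F ⁻¹' (Ioi u)) := isOpen_Ioi.preimage hF
  obtain ⟨ε, hε, hball⟩ := Metric.isOpen_iff.1 hopen _ hlt
  set t := max 0 (geninv F u - ε/2) with ht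
  have ht0 : 0 ≤ t := le_max_left _ _
  have htlt : t < geninv F u := max_lt hpos (by linarith)
  have htball : t ∈ Metric.ball (geninv F u) ε := by
    rw [Metric.mem_ball, Real.dist_eq, abs_lt]
    have h1 : geninv F u - ε/2 ≤ t := le_max_right _ _
    constructor <;> linarith
  have htS : t ∈ S := ⟨ht0, le_of_lt (hball htball)⟩
  have := csInf_le hbdd htS
  rw [← hgi] at this
  linarith

lemma integral_posPart_subgrad {Ω : Type*} [MeasurableSpace Ω] (μ : Measure Ω)
    [IsProbabilityMeasure μ] (X : Ω → ℝ) (hX : Measurable X) (hXnn : ∀ ω, 0 ≤ X ω)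
    (xs x : ℝ) :
    (∫ ω, max (xs - X ω) 0 ∂μ) + cdfOf μ X xs * (x - xs)
      ≤ ∫ ω, max (x - X ω) 0 ∂μ := by
  have hs : MeasurableSet {ω | X ω ≤ xs} := hX measurableSet_Iic
  have hind : Integrable (({ω | X ω ≤ xs}).indicator (fun _ => (x - xs))) μ :=
    (integrable_const (x - xs)).indicator hs
  have hI1 := integrable_posPart μ X hX hXnn xs
  have hI2 := integrable_posPart μ X hX hXnn x
  have key : ∀ ω, max (xs - X ω) 0 + ({ω | X ω ≤ xs}).indicator (fun _ => (x - xs)) ω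
      ≤ max (x - X ω) 0 := by
    intro ω
    by_cases h : X ω ≤ xs
    · rw [Set.indicator_of_mem (show ω ∈ {ω | X ω ≤ xs} from h),
        max_eq_left (by linarith : (0:ℝ) ≤ xs - X ω)]
      have := le_max_left (x - X ω) (0:ℝ)
      linarith
    · rw [Set.indicator_of_notMem (show ω ∉ {ω | X ω ≤ xs} from h),
        max_eq_right (by linarith [lt_of_not_ge h] : xs - X ω ≤ 0)]
      simpa using le_max_right (x - X ω) (0:ℝ)
  have hmono := integral_mono (hI1.add hind) hI2 key
  rw [integral_add' hI1 hind, integral_indicator_const _ hs, smul_eq_mul] at hmono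
  exact hmono

/-- Proposition 2 (primal optimality): if `0 < π* ≤ min(λ, p̄)` and
`Q(π*) = ∑ᵢ yᵢ*(π*) = D`, then the vector with `xᵢ* = yᵢ*(π*)` and lost load `x₀* = 0`
minimizes `∑ᵢ λ·E[(xᵢ − Xᵢ)⁺] + p̄·x₀` subject to `∑ᵢ xᵢ + x₀ = D`, `x₀ ≥ 0`, `xᵢ ≥ 0`. -/
theorem rup_primal_optimality
    {Ω : Type*} [MeasurableSpace Ω] (μ : Measure Ω) [IsProbabilityMeasure μ]
    (I : ℕ) (hI : 2 ≤ I)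
    (X : Fin I → Ω → ℝ) (hX : ∀ i, Measurable (X i)) (hXnn : ∀ i ω, 0 ≤ X i ω)
    (Xbar : Fin I → ℝ) (hXbar : ∀ i, 0 < Xbar i)
    (hsupp : ∀ i, μ {ω | X i ω ≤ Xbar i} = 1)
    (hFc : ∀ i, Continuous (cdfOf μ (X i)))
    (hF0 : ∀ i, cdfOf μ (X i) 0 = 0) (hF1 : ∀ i, cdfOf μ (X i) (Xbar i) = 1)
    (lam : ℝ) (hlam : 0 < lam) (pbar : ℝ) (hpbar : 0 < pbar)
    (D : ℝ) (hD : 0 < D)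
    (pistar : ℝ) (hpi0 : 0 < pistar) (hpile : pistar ≤ min lam pbar)
    (hclear : (∑ i, ystar (cdfOf μ (X i)) lam pistar) = D) :
    ∀ (x0 : ℝ) (x : Fin I → ℝ), 0 ≤ x0 → (∀ i, 0 ≤ x i) → (∑ i, x i) + x0 = D →
      (∑ i, lam * ∫ ω, max (ystar (cdfOf μ (X i)) lam pistar - X i ω) 0 ∂μ) + pbar * 0
        ≤ (∑ i, lam * ∫ ω, max (x i - X i ω) 0 ∂μ) + pbar * x0 := by
  intro x0 x hx0 hx hbal
  have hlampi : pistar ≤ lam := le_trans hpile (min_le_left _ _)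
  have hpbarpi : pistar ≤ pbar := le_trans hpile (min_le_right _ _)
  have hu0 : 0 < pistar / lam := div_pos hpi0 hlam
  have hu1 : pistar / lam ≤ 1 := (div_le_one hlam).2 hlampi
  set xs : Fin I → ℝ := fun i => ystar (cdfOf μ (X i)) lam pistar with hxs
  have hFxs : ∀ i, cdfOf μ (X i) (xs i) = pistar / lam := by
    intro i
    have : xs i = geninv (cdfOf μ (X i)) (pistar / lam) := by
      rw [hxs]; simp only [ystar, min_eq_left hu1]
    rw [this]
    exact cdf_geninv_eq _ (hFc i) (hF0 i) _ (Xbar i) hu0 (hXbar i).le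
      (by rw [hF1 i]; exact hu1)
  have key : ∀ i : Fin I,
      lam * (∫ ω, max (xs i - X i ω) 0 ∂μ) + pistar * (x i - xs i)
        ≤ lam * ∫ ω, max (x i - X i ω) 0 ∂μ := by
    intro i
    have h := integral_posPart_subgrad μ (X i) (hX i) (hXnn i) (xs i) (x i)
    have := mul_le_mul_of_nonneg_left h hlam.le
    rw [mul_add, hFxs i] at this
    have heq : lam * (pistar / lam * (x i - xs i)) = pistar * (x i - xs i) := by
      field_simp
    linarith [heq ▸ this]
  have hsum := Finset.sum_le_sum (fun i (_ : i ∈ Finset.univ) => key i)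
  have h1 : (∑ i, pistar * (x i - xs i)) = pistar * ((∑ i, x i) - ∑ i, xs i) := by
    rw [← Finset.mul_sum, Finset.sum_sub_distrib]
  rw [Finset.sum_add_distrib, h1] at hsum
  show (∑ i, lam * ∫ ω, max (xs i - X i ω) 0 ∂μ) + pbar * 0
      ≤ (∑ i, lam * ∫ ω, max (x i - X i ω) 0 ∂μ) + pbar * x0
  have hpb : pistar * x0 ≤ pbar * x0 := mul_le_mul_of_nonneg_right hpbarpi hx0
  have hxsum : (∑ i, x i) = D - x0 := by linarith
  rw [hxsum, hclear] at hsum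
  nlinarith
end

section
/- (RUP profit identity) Suppose F is continuous on ℝ with F(0) = 0. For any price π with 0 < π ≤ λ, the expected profit of a supplier paid π for the commitment y*(π) satisfies π·y*(π) − λ·E[(y*(π) − X)⁺] = λ·E[X·1{X ≤ y*(π)}]. -/
open MeasureTheory Set

/- The commitment `y = y*(π)` hits the quantile exactly, `F(y) = π/λ`, because `F` is continuous
with `F(0) = 0`. Splitting `E[(y − X)⁺] = y·F(y) − E[X·1{X ≤ y}]` then makes the term `π·y`
cancel against `λ·y·F(y)`. -/

/-- The infimum defining `F⁻¹(u)` is attained since its set is closed; the intermediate value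
theorem on `[0, F⁻¹(u)]` then yields a point of level `u` that cannot lie strictly left of it. -/
theorem apply_geninv_eq {F : ℝ → ℝ} (hF : Continuous F) {u : ℝ} (hu0 : F 0 ≤ u)
    {t : ℝ} (ht0 : 0 ≤ t) (htu : u ≤ F t) : F (geninv F u) = u := by
  set S := {t : ℝ | 0 ≤ t ∧ u ≤ F t}
  have hS_closed : IsClosed S :=
    (isClosed_le continuous_const continuous_id).inter (isClosed_le continuous_const hF)
  have hS_bdd : BddBelow S := ⟨0, fun _ hs => hs.1⟩
  obtain ⟨hy0, hyu⟩ : geninv F u ∈ S := hS_closed.csInf_mem ⟨t, ht0, htu⟩ hS_bdd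
  obtain ⟨s, ⟨hs0, hsy⟩, hFs⟩ :=
    intermediate_value_Icc hy0 hF.continuousOn ⟨hu0, hyu⟩
  have hys : geninv F u ≤ s := csInf_le hS_bdd ⟨hs0, hFs.ge⟩
  rwa [le_antisymm hsy hys] at hFs

theorem integrableOn_setOf_le_of_nonneg {Ω : Type*} [MeasurableSpace Ω] {μ : Measure Ω}
    [IsFiniteMeasure μ] {X : Ω → ℝ} (hX : Measurable X) (hXnn : ∀ ω, 0 ≤ X ω) (y : ℝ) :
    IntegrableOn X {ω | X ω ≤ y} μ := by
  refine Measure.integrableOn_of_bounded (M := y) (measure_ne_top μ _)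
    hX.aestronglyMeasurable ?_
  filter_upwards [ae_restrict_mem (hX measurableSet_Iic)] with ω hω
  rwa [Real.norm_of_nonneg (hXnn ω)]

theorem integral_max_sub_eq {Ω : Type*} [MeasurableSpace Ω] {μ : Measure Ω}
    [IsFiniteMeasure μ] {X : Ω → ℝ} (hX : Measurable X) {y : ℝ}
    (hint : IntegrableOn X {ω | X ω ≤ y} μ) :
    ∫ ω, max (y - X ω) 0 ∂μ = y * cdfOf μ X y - ∫ ω in {ω | X ω ≤ y}, X ω ∂μ := by
  have hA : MeasurableSet {ω | X ω ≤ y} := hX measurableSet_Iic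
  have hmax : (fun ω => max (y - X ω) 0) = {ω | X ω ≤ y}.indicator (fun ω => y - X ω) := by
    ext ω
    by_cases h : ω ∈ {ω | X ω ≤ y}
    · rw [indicator_of_mem h, max_eq_left (sub_nonneg.mpr h)]
    · rw [indicator_of_notMem h, max_eq_right (sub_nonpos.mpr (not_le.mp h).le)]
  rw [hmax, integral_indicator hA, integral_sub (integrableOn_const (C := y) (measure_ne_top μ _)) hint,
    setIntegral_const, smul_eq_mul, mul_comm, Measure.real, cdfOf]

theorem rup_profit_identity_general
    {Ω : Type*} [MeasurableSpace Ω] (μ : Measure Ω) [IsProbabilityMeasure μ]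
    (X : Ω → ℝ) (hX : Measurable X) (hXnn : ∀ ω, 0 ≤ X ω)
    (Xbar : ℝ) (hXbar : 0 < Xbar)
    (hFc : Continuous (cdfOf μ X)) (hF0 : cdfOf μ X 0 = 0) (hF1 : cdfOf μ X Xbar = 1)
    (lam : ℝ) (hlam : 0 < lam) (pr : ℝ) (hpr0 : 0 < pr) (hprl : pr ≤ lam) :
    pr * ystar (cdfOf μ X) lam pr
        - lam * ∫ ω, max (ystar (cdfOf μ X) lam pr - X ω) 0 ∂μ
      = lam * ∫ ω in {ω | X ω ≤ ystar (cdfOf μ X) lam pr}, X ω ∂μ := by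
  have hmin : min (pr / lam) 1 = pr / lam := min_eq_left ((div_le_one hlam).mpr hprl)
  have hFy : cdfOf μ X (ystar (cdfOf μ X) lam pr) = pr / lam := by
    rw [ystar, hmin]
    refine apply_geninv_eq hFc (by rw [hF0]; positivity) hXbar.le ?_
    rw [hF1, div_le_one hlam]
    exact hprl
  rw [integral_max_sub_eq hX (integrableOn_setOf_le_of_nonneg hX hXnn _), hFy]
  field_simp
  ring

/-- RUP profit identity: for any price `π` with `0 < π ≤ λ`, the expected profit of a
supplier paid `π` for the commitment `y*(π)` satisfies
`π·y*(π) − λ·E[(y*(π) − X)⁺] = λ·E[X·1{X ≤ y*(π)}]`. -/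
theorem rup_profit_identity
    {Ω : Type*} [MeasurableSpace Ω] (μ : Measure Ω) [IsProbabilityMeasure μ]
    (X : Ω → ℝ) (hX : Measurable X) (hXnn : ∀ ω, 0 ≤ X ω)
    (Xbar : ℝ) (hXbar : 0 < Xbar) (hsupp : μ {ω | X ω ≤ Xbar} = 1)
    (hFc : Continuous (cdfOf μ X)) (hF0 : cdfOf μ X 0 = 0) (hF1 : cdfOf μ X Xbar = 1)
    (lam : ℝ) (hlam : 0 < lam) (pr : ℝ) (hpr0 : 0 < pr) (hprl : pr ≤ lam) :
    pr * ystar (cdfOf μ X) lam pr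
        - lam * ∫ ω, max (ystar (cdfOf μ X) lam pr - X ω) 0 ∂μ
      = lam * ∫ ω in {ω | X ω ≤ ystar (cdfOf μ X) lam pr}, X ω ∂μ :=
  rup_profit_identity_general μ X hX hXnn Xbar hXbar hFc hF0 hF1 lam hlam pr hpr0 hprl
end
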